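/- arXiv:1406.1220 — 5 statements merged into one kernel-verified Lean document; each statement's English description precedes it below -/
import Mathlib

section
/- Let π : Y → X be a factor map between systems (Y,S,T) and (X,S,T) with commuting transformations, where Y is minimal. Then the image of Q_{S,T}(Y) under π×π×π×π equals Q_{S,T}(X), and consequently π×π maps Q_S(Y) onto Q_S(X) and Q_T(Y) onto Q_T(X). -/
/-- The `n`-th integer iterate of a homeomorphism, as a function. -/
def hpow {X : Type*} [TopologicalSpace X] (S : X ≃ₜ X) (n : ℤ) : X → X :=
  ⇑(S.toEquiv ^ n)

variable {X : Type*} [TopologicalSpace X]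

def cube (S T : X ≃ₜ X) : Set (X × X × X × X) :=
  closure {p | ∃ (x : X) (n m : ℤ),
    p = (x, hpow S n x, hpow T m x, hpow S n (hpow T m x))}

def cube2 (S : X ≃ₜ X) : Set (X × X) :=
  closure {p | ∃ (x : X) (n : ℤ), p = (x, hpow S n x)}

def relS (S T : X ≃ₜ X) : Set (X × X) :=
  {p | ∃ a : X, (p.1, p.2, a, a) ∈ cube S T}

def relT (S T : X ≃ₜ X) : Set (X × X) :=
  {p | ∃ b : X, (p.1, b, p.2, b) ∈ cube S T}

def minimalST (S T : X ≃ₜ X) : Prop :=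
  ∀ x : X, Dense {y : X | ∃ n m : ℤ, y = hpow S n (hpow T m x)}

def minimal1 (S : X ≃ₜ X) : Prop :=
  ∀ x : X, Dense {y : X | ∃ n : ℤ, y = hpow S n x}

def distalST {Y : Type*} [MetricSpace Y] (S T : Y ≃ₜ Y) : Prop :=
  ∀ x y : Y, x ≠ y → ∃ ε > 0, ∀ n m : ℤ,
    ε ≤ dist (hpow S n (hpow T m x)) (hpow S n (hpow T m y))

def proxT {Y : Type*} [MetricSpace Y] (T : Y ≃ₜ Y) : Set (Y × Y) :=
  {p | ∀ ε > 0, ∃ m : ℤ, dist (hpow T m p.1) (hpow T m p.2) < ε}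

/-!
Since `π` is onto and intertwines the actions, `π × π × π × π` maps the generating set
`{(y, Sⁿ y, Tᵐ y, SⁿTᵐ y)}` of `Q_{S,T}(Y)` onto that of `Q_{S,T}(X)`. A continuous map from a
compact space to a Hausdorff one is closed, so it also maps closures onto closures.
The same argument works for `Q_S` and `Q_T`.
-/

section FactorMap

variable {Y : Type*} [TopologicalSpace Y] {π : Y → X}

theorem Function.Semiconj.hpow {S : Y ≃ₜ Y} {S' : X ≃ₜ X} (h : Function.Semiconj π S S')
    (n : ℤ) : Function.Semiconj π (_root_.hpow S n) (_root_.hpow S' n) := by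
  have hnat (k : ℕ) : Function.Semiconj π (_root_.hpow S k) (_root_.hpow S' k) := by
    simpa [_root_.hpow, Equiv.Perm.coe_pow] using h.iterate_right k
  cases n with
  | ofNat k => exact hnat k
  | negSucc k =>
    simp only [_root_.hpow, zpow_negSucc]
    exact (hnat (k + 1)).inverses_right (Equiv.apply_symm_apply _) (Equiv.symm_apply_apply _)

theorem image_cube_generators (hsurj : Function.Surjective π) {SY TY : Y ≃ₜ Y}
    {SX TX : X ≃ₜ X} (hS : Function.Semiconj π SY SX) (hT : Function.Semiconj π TY TX) :
    (fun p : Y × Y × Y × Y => (π p.1, π p.2.1, π p.2.2.1, π p.2.2.2)) ''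
        {p | ∃ (y : Y) (n m : ℤ), p = (y, hpow SY n y, hpow TY m y, hpow SY n (hpow TY m y))}
      = {p | ∃ (x : X) (n m : ℤ), p = (x, hpow SX n x, hpow TX m x, hpow SX n (hpow TX m x))} := by
  ext p
  constructor
  · rintro ⟨_, ⟨y, n, m, rfl⟩, rfl⟩
    exact ⟨π y, n, m, by simp only [(hS.hpow n).eq, (hT.hpow m).eq]⟩
  · rintro ⟨x, n, m, rfl⟩
    obtain ⟨y, rfl⟩ := hsurj x
    exact ⟨_, ⟨y, n, m, rfl⟩, by simp only [(hS.hpow n).eq, (hT.hpow m).eq]⟩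

theorem image_cube2_generators (hsurj : Function.Surjective π) {SY : Y ≃ₜ Y} {SX : X ≃ₜ X}
    (hS : Function.Semiconj π SY SX) :
    (fun p : Y × Y => (π p.1, π p.2)) '' {p | ∃ (y : Y) (n : ℤ), p = (y, hpow SY n y)}
      = {p | ∃ (x : X) (n : ℤ), p = (x, hpow SX n x)} := by
  ext p
  constructor
  · rintro ⟨_, ⟨y, n, rfl⟩, rfl⟩
    exact ⟨π y, n, by simp only [(hS.hpow n).eq]⟩
  · rintro ⟨x, n, rfl⟩
    obtain ⟨y, rfl⟩ := hsurj x
    exact ⟨_, ⟨y, n, rfl⟩, by simp only [(hS.hpow n).eq]⟩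

variable [CompactSpace Y] [T2Space X]

theorem image_cube (hcont : Continuous π) (hsurj : Function.Surjective π) {SY TY : Y ≃ₜ Y}
    {SX TX : X ≃ₜ X} (hS : Function.Semiconj π SY SX) (hT : Function.Semiconj π TY TX) :
    (fun p : Y × Y × Y × Y => (π p.1, π p.2.1, π p.2.2.1, π p.2.2.2)) '' cube SY TY
      = cube SX TX := by
  have hcont₄ : Continuous fun p : Y × Y × Y × Y => (π p.1, π p.2.1, π p.2.2.1, π p.2.2.2) := by
    fun_prop
  rw [cube, cube, ← (hcont₄.isClosedMap).closure_image_eq_of_continuous hcont₄,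
    image_cube_generators hsurj hS hT]

theorem image_cube2 (hcont : Continuous π) (hsurj : Function.Surjective π) {SY : Y ≃ₜ Y}
    {SX : X ≃ₜ X} (hS : Function.Semiconj π SY SX) :
    (fun p : Y × Y => (π p.1, π p.2)) '' cube2 SY = cube2 SX := by
  have hcont₂ : Continuous fun p : Y × Y => (π p.1, π p.2) := by fun_prop
  rw [cube2, cube2, ← (hcont₂.isClosedMap).closure_image_eq_of_continuous hcont₂,
    image_cube2_generators hsurj hS]

end FactorMap

theorem stmt2_general {Y X : Type*} [MetricSpace Y] [CompactSpace Y]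
    [MetricSpace X]
    (SY TY : Y ≃ₜ Y) (SX TX : X ≃ₜ X)
    (π : Y → X) (hcont : Continuous π) (hsurj : Function.Surjective π)
    (hπS : ∀ y, π (SY y) = SX (π y)) (hπT : ∀ y, π (TY y) = TX (π y)) :
    (fun p : Y × Y × Y × Y => (π p.1, π p.2.1, π p.2.2.1, π p.2.2.2)) '' cube SY TY
      = cube SX TX ∧
    (fun p : Y × Y => (π p.1, π p.2)) '' cube2 SY = cube2 SX ∧
    (fun p : Y × Y => (π p.1, π p.2)) '' cube2 TY = cube2 TX :=
  ⟨image_cube hcont hsurj hπS hπT, image_cube2 hcont hsurj hπS, image_cube2 hcont hsurj hπT⟩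

theorem stmt2 {Y X : Type*} [MetricSpace Y] [CompactSpace Y]
    [MetricSpace X] [CompactSpace X]
    (SY TY : Y ≃ₜ Y) (SX TX : X ≃ₜ X)
    (hY : ∀ y, SY (TY y) = TY (SY y)) (hX : ∀ x, SX (TX x) = TX (SX x))
    (π : Y → X) (hcont : Continuous π) (hsurj : Function.Surjective π)
    (hπS : ∀ y, π (SY y) = SX (π y)) (hπT : ∀ y, π (TY y) = TX (π y))
    (hmin : minimalST SY TY) :
    (fun p : Y × Y × Y × Y => (π p.1, π p.2.1, π p.2.2.1, π p.2.2.2)) '' cube SY TY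
      = cube SX TX ∧
    (fun p : Y × Y => (π p.1, π p.2)) '' cube2 SY = cube2 SX ∧
    (fun p : Y × Y => (π p.1, π p.2)) '' cube2 TY = cube2 TX :=
  stmt2_general SY TY SX TX π hcont hsurj hπS hπT
end

section
/- Let (Y,σ) and (W,τ) be topological dynamical systems with homeomorphisms σ and τ, and consider the product system X = Y×W with commuting transformations S = σ×id and T = id×τ. Then R_{S,T}(X) equals the diagonal of X×X; that is, if ((y1,w1),(y2,w2)) ∈ R_S(X) ∩ R_T(X) then (y1,w1) = (y2,w2). -/
variable {X : Type*} [TopologicalSpace X]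

/-! Since `S = σ × id` moves only the first coordinate and `T = id × τ` only the second, each
generating point `(x, Sⁿx, Tᵐx, SⁿTᵐx)` of the cube has the shape `((y,w), (y',w), (y,w'), (y',w'))`.
These coordinate equations are closed, so they persist in the closure. For `(x, x', a, a)` they
say that `x` and `x'` share their second coordinate and both have the first coordinate of `a`;
hence already `R_S` is the diagonal, while the diagonal lies in every `R_S`, `R_T` via `n = m = 0`. -/

@[simp]
lemma hpow_refl (n : ℤ) (x : X) : hpow (Homeomorph.refl X) n x = x := by
  change ((1 : Equiv.Perm X) ^ n) x = x
  simp

lemma hpow_prodCongr {Y W : Type*} [TopologicalSpace Y] [TopologicalSpace W]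
    (σ : Y ≃ₜ Y) (τ : W ≃ₜ W) (n : ℤ) (z : Y × W) :
    hpow (σ.prodCongr τ) n z = (hpow σ n z.1, hpow τ n z.2) := by
  unfold hpow
  induction n using Int.induction_on generalizing z with
  | zero => rfl
  | succ k ih =>
    simp only [zpow_add_one, Equiv.Perm.mul_apply, ih]
    rfl
  | pred k ih =>
    simp only [zpow_sub_one, Equiv.Perm.mul_apply, ih]
    rfl

lemma diagonal_subset_relS (S T : X ≃ₜ X) : Set.diagonal X ⊆ relS S T := by
  rintro ⟨x, _⟩ (rfl : x = _)
  exact ⟨x, subset_closure ⟨x, 0, 0, rfl⟩⟩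

lemma diagonal_subset_relT (S T : X ≃ₜ X) : Set.diagonal X ⊆ relT S T := by
  rintro ⟨x, _⟩ (rfl : x = _)
  exact ⟨x, subset_closure ⟨x, 0, 0, rfl⟩⟩

section Product

variable {Y W : Type*} [TopologicalSpace Y] [TopologicalSpace W] [T2Space Y] [T2Space W]

lemma cube_prodCongr_subset (σ : Y ≃ₜ Y) (τ : W ≃ₜ W) :
    cube (σ.prodCongr (Homeomorph.refl W)) ((Homeomorph.refl Y).prodCongr τ) ⊆
      {p | p.1.2 = p.2.1.2 ∧ p.1.1 = p.2.2.1.1 ∧ p.2.1.1 = p.2.2.2.1 ∧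
        p.2.2.1.2 = p.2.2.2.2} := by
  refine closure_minimal ?_ ?_
  · rintro p ⟨x, n, m, rfl⟩
    simp [hpow_prodCongr]
  · refine (isClosed_eq ?_ ?_).inter <| (isClosed_eq ?_ ?_).inter <|
      (isClosed_eq ?_ ?_).inter (isClosed_eq ?_ ?_) <;> fun_prop

lemma relS_prodCongr_subset_diagonal (σ : Y ≃ₜ Y) (τ : W ≃ₜ W) :
    relS (σ.prodCongr (Homeomorph.refl W)) ((Homeomorph.refl Y).prodCongr τ) ⊆
      Set.diagonal (Y × W) := by
  rintro ⟨⟨y, w⟩, ⟨y', w'⟩⟩ ⟨a, ha⟩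
  obtain ⟨hw, hy, hy', -⟩ := cube_prodCongr_subset σ τ ha
  exact Prod.ext (hy.trans hy'.symm) hw

end Product

theorem stmt4_general {Y W : Type*} [MetricSpace Y]
    [MetricSpace W] (σ : Y ≃ₜ Y) (τ : W ≃ₜ W) :
    relS (σ.prodCongr (Homeomorph.refl W)) ((Homeomorph.refl Y).prodCongr τ) ∩
      relT (σ.prodCongr (Homeomorph.refl W)) ((Homeomorph.refl Y).prodCongr τ)
      = Set.diagonal (Y × W) :=
  subset_antisymm (Set.inter_subset_left.trans (relS_prodCongr_subset_diagonal σ τ))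
    (Set.subset_inter (diagonal_subset_relS _ _) (diagonal_subset_relT _ _))

theorem stmt4 {Y W : Type*} [MetricSpace Y] [CompactSpace Y]
    [MetricSpace W] [CompactSpace W] (σ : Y ≃ₜ Y) (τ : W ≃ₜ W) :
    relS (σ.prodCongr (Homeomorph.refl W)) ((Homeomorph.refl Y).prodCongr τ) ∩
      relT (σ.prodCongr (Homeomorph.refl W)) ((Homeomorph.refl Y).prodCongr τ)
      = Set.diagonal (Y × W) :=
  stmt4_general σ τ
end

section
/- For any minimal system (X,S,T) with commuting transformations S and T, the intersection Q_S(X) ∩ P_T(X) is contained in R_S(X), where P_T(X) denotes the set of proximal pairs under T. -/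
variable {X : Type*} [TopologicalSpace X]

/-- Each integer power of a homeomorphism is continuous. -/
lemma hpow_continuous {Z : Type*} [TopologicalSpace Z] (S : Z ≃ₜ Z) (n : ℤ) :
    Continuous (hpow S n) := by
  unfold hpow
  rcases n with k | k
  · rw [Int.ofNat_eq_coe, zpow_natCast, Equiv.Perm.coe_pow]
    exact S.continuous.iterate k
  · rw [zpow_negSucc, ← inv_pow, Equiv.Perm.coe_pow]
    have : ⇑(S.toEquiv⁻¹) = ⇑S.symm := rfl
    rw [this]
    exact S.symm.continuous.iterate (k + 1)

/-- Powers of commuting homeomorphisms commute. -/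
lemma hpow_comm {Z : Type*} [TopologicalSpace Z] (S T : Z ≃ₜ Z)
    (hST : ∀ x, S (T x) = T (S x)) (n m : ℤ) (x : Z) :
    hpow S n (hpow T m x) = hpow T m (hpow S n x) := by
  have hc : Commute S.toEquiv T.toEquiv := Equiv.ext fun z => hST z
  exact congrFun (congrArg (fun e : Equiv.Perm Z => ⇑e) (hc.zpow_zpow n m)) x

/-- If `(x, y) ∈ Q_S(X)`, then `(x, y, T^m x, T^m y) ∈ Q_{S,T}(X)` for every `m`,
since `T^m` commutes with all powers of `S`. -/
lemma key_step {Z : Type*} [TopologicalSpace Z] (S T : Z ≃ₜ Z)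
    (hST : ∀ x, S (T x) = T (S x)) {x y : Z} (hxy : (x, y) ∈ cube2 S) (m : ℤ) :
    (x, y, hpow T m x, hpow T m y) ∈ cube S T := by
  set f : Z × Z → Z × Z × Z × Z := fun q => (q.1, q.2, hpow T m q.1, hpow T m q.2) with hf
  have hfc : Continuous f := by
    apply Continuous.prodMk continuous_fst
    apply Continuous.prodMk continuous_snd
    exact Continuous.prodMk ((hpow_continuous T m).comp continuous_fst)
      ((hpow_continuous T m).comp continuous_snd)
  have h1 : f '' {p : Z × Z | ∃ (z : Z) (n : ℤ), p = (z, hpow S n z)} ⊆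
      {p : Z × Z × Z × Z | ∃ (z : Z) (n k : ℤ),
        p = (z, hpow S n z, hpow T k z, hpow S n (hpow T k z))} := by
    rintro _ ⟨_, ⟨z, n, rfl⟩, rfl⟩
    exact ⟨z, n, m, by simp [f, hpow_comm S T hST n m z]⟩
  have h2 : f (x, y) ∈ f '' (cube2 S) := Set.mem_image_of_mem f hxy
  have h3 : f '' (cube2 S) ⊆ cube S T :=
    (image_closure_subset_closure_image hfc).trans (closure_mono h1)
  exact h3 h2

theorem stmt6 {X : Type*} [MetricSpace X] [CompactSpace X] (S T : X ≃ₜ X)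
    (hST : ∀ x, S (T x) = T (S x)) (hmin : minimalST S T) :
    cube2 S ∩ proxT T ⊆ relS S T := by
  rintro ⟨x, y⟩ ⟨hc2, hprox⟩
  -- by proximality, choose `m k` with `dist (T^{m k} x) (T^{m k} y) < 1/(k+1)`
  have hm : ∀ k : ℕ, ∃ m : ℤ, dist (hpow T m x) (hpow T m y) < 1 / (k + 1) := fun k =>
    hprox (1 / (k + 1)) (by positivity)
  choose m hmlt using hm
  -- by compactness, a subsequence of `T^{m k} x` converges to some `a`
  obtain ⟨a, -, φ, hφ, ha⟩ := IsCompact.tendsto_subseq (x := fun k => hpow T (m k) x)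
    (isCompact_univ) (fun k => Set.mem_univ _)
  -- the corresponding subsequence of `T^{m k} y` also converges to `a`
  have hb : Filter.Tendsto (fun k => hpow T (m (φ k)) y) Filter.atTop (nhds a) := by
    rw [tendsto_iff_dist_tendsto_zero]
    apply squeeze_zero (fun k => dist_nonneg)
      (g := fun k => 1 / (k + 1) + dist (hpow T (m (φ k)) x) a)
    · intro k
      calc dist (hpow T (m (φ k)) y) a
          ≤ dist (hpow T (m (φ k)) y) (hpow T (m (φ k)) x) + dist (hpow T (m (φ k)) x) a :=
            dist_triangle _ _ _
        _ ≤ 1 / (k + 1) + dist (hpow T (m (φ k)) x) a := by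
            refine add_le_add ?_ le_rfl
            rw [dist_comm]
            refine (hmlt (φ k)).le.trans ?_
            gcongr
            exact_mod_cast hφ.id_le k
    · have h0 : Filter.Tendsto (fun k : ℕ => 1 / ((k : ℝ) + 1)) Filter.atTop (nhds 0) :=
        tendsto_one_div_add_atTop_nhds_zero_nat
      have h1 : Filter.Tendsto (fun k => dist (hpow T (m (φ k)) x) a) Filter.atTop (nhds 0) :=
        (tendsto_iff_dist_tendsto_zero).mp ha
      simpa using h0.add h1
  refine ⟨a, ?_⟩
  -- the tuples `(x, y, T^{m k} x, T^{m k} y)` lie in the cube and converge to `(x, y, a, a)`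
  have hmem : ∀ k, (x, y, hpow T (m (φ k)) x, hpow T (m (φ k)) y) ∈ cube S T :=
    fun k => key_step S T hST hc2 (m (φ k))
  have htend : Filter.Tendsto
      (fun k => (x, y, hpow T (m (φ k)) x, hpow T (m (φ k)) y)) Filter.atTop
      (nhds (x, y, a, a)) :=
    tendsto_const_nhds.prodMk_nhds (tendsto_const_nhds.prodMk_nhds (ha.prodMk_nhds hb))
  exact isClosed_closure.mem_of_tendsto htend (Filter.Eventually.of_forall hmem)
end

section
/- Let (X,S,T) be a minimal system with commuting transformations S and T such that Q_S(X) ∩ Q_T(X) = Δ_X (the diagonal). Then R_S(X) = Δ_X. -/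
variable {X : Type*} [TopologicalSpace X]

theorem hpow_eq_coe_zpow (S : X ≃ₜ X) (n : ℤ) : hpow S n = ⇑(S ^ n) :=
  let toPerm : (X ≃ₜ X) →* Equiv.Perm X := MonoidHom.mk' Homeomorph.toEquiv fun _ _ => rfl
  congrArg DFunLike.coe (map_zpow toPerm S n).symm

theorem continuous_hpow (S : X ≃ₜ X) (n : ℤ) : Continuous (hpow S n) := by
  rw [hpow_eq_coe_zpow]
  exact (S ^ n).continuous

@[simp]
theorem hpow_zero_apply (S : X ≃ₜ X) (x : X) : hpow S 0 x = x := by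
  simp [hpow_eq_coe_zpow]

theorem hpow_add_apply (S : X ≃ₜ X) (n m : ℤ) (x : X) :
    hpow S (n + m) x = hpow S n (hpow S m x) := by
  simp [hpow_eq_coe_zpow, zpow_add]

theorem hpow_hpow_comm {S T : X ≃ₜ X} (hST : ∀ x, S (T x) = T (S x)) (n m : ℤ) (x : X) :
    hpow S n (hpow T m x) = hpow T m (hpow S n x) := by
  have hcomm : Commute (S ^ n) (T ^ m) := Commute.zpow_zpow (Homeomorph.ext hST) n m
  simpa [hpow_eq_coe_zpow] using DFunLike.congr_fun hcomm.eq x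

section cube

variable {S T : X ≃ₜ X}

theorem mem_cube2_of_mem_cube_fst_snd {p : X × X × X × X} (hp : p ∈ cube S T) :
    (p.1, p.2.1) ∈ cube2 S :=
  map_mem_closure (f := fun p : X × X × X × X => (p.1, p.2.1)) (by fun_prop) hp
    (by rintro _ ⟨x, n, m, rfl⟩; exact ⟨x, n, rfl⟩)

theorem mem_cube2_of_mem_cube_fst_thd {p : X × X × X × X} (hp : p ∈ cube S T) :
    (p.1, p.2.2.1) ∈ cube2 T :=
  map_mem_closure (f := fun p : X × X × X × X => (p.1, p.2.2.1)) (by fun_prop) hp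
    (by rintro _ ⟨x, n, m, rfl⟩; exact ⟨x, m, rfl⟩)

theorem mem_cube2_of_mem_cube_snd_fth (hST : ∀ x, S (T x) = T (S x)) {p : X × X × X × X}
    (hp : p ∈ cube S T) : (p.2.1, p.2.2.2) ∈ cube2 T :=
  map_mem_closure (f := fun p : X × X × X × X => (p.2.1, p.2.2.2)) (by fun_prop) hp
    (by rintro _ ⟨x, n, m, rfl⟩; exact ⟨hpow S n x, m, by rw [hpow_hpow_comm hST]⟩)

theorem swap_mem_cube2 {p : X × X} (hp : p ∈ cube2 S) : p.swap ∈ cube2 S :=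
  map_mem_closure continuous_swap hp (by
    rintro _ ⟨x, n, rfl⟩
    exact ⟨hpow S n x, -n, by rw [← hpow_add_apply, neg_add_cancel, hpow_zero_apply]; rfl⟩)

theorem diag_mem_cube (x : X) : (x, x, x, x) ∈ cube S T :=
  subset_closure ⟨x, 0, 0, by simp⟩

theorem mem_cube_map_hpow_thd_fth (hST : ∀ x, S (T x) = T (S x)) (m : ℤ)
    {u v b c : X} (h : (u, v, b, c) ∈ cube S T) :
    (u, v, hpow T m b, hpow T m c) ∈ cube S T := by
  have hf : Continuous fun p : X × X × X × X =>
      (p.1, p.2.1, hpow T m p.2.2.1, hpow T m p.2.2.2) := by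
    have := continuous_hpow T m
    fun_prop
  apply map_mem_closure hf h
  rintro _ ⟨x, n, k, rfl⟩
  exact ⟨x, n, m + k, by simp only [hpow_add_apply, hpow_hpow_comm hST n m]⟩

theorem mem_cube2_map_hpow (hST : ∀ x, S (T x) = T (S x)) (n m : ℤ)
    {b w : X} (h : (b, w) ∈ cube2 S) :
    (hpow T m b, hpow S n (hpow T m w)) ∈ cube2 S := by
  have hf : Continuous fun q : X × X => (hpow T m q.1, hpow S n (hpow T m q.2)) := by
    have := continuous_hpow T m
    have := continuous_hpow S n
    fun_prop
  apply map_mem_closure hf h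
  rintro _ ⟨x, k, rfl⟩
  exact ⟨hpow T m x, n + k, by rw [hpow_add_apply, hpow_hpow_comm hST k m]⟩

theorem eq_univ_of_isClosed_of_hpow_mem (hmin : minimalST S T) {C : Set X}
    (hC : IsClosed C) {x : X} (hx : x ∈ C)
    (hinv : ∀ (n m : ℤ), ∀ w ∈ C, hpow S n (hpow T m w) ∈ C) : C = Set.univ := by
  have hdense : Dense C := (hmin x).mono (by rintro _ ⟨n, m, rfl⟩; exact hinv n m x hx)
  rw [← hC.closure_eq, hdense.closure_eq]

/- The points `w` admitting some `b` with `(b, w) ∈ cube2 S` and `(u, v, b, b) ∈ cube S T`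
form a closed invariant set containing `a`, hence all of `X`; take `w = u`. -/
theorem exists_mem_cube_and_mem_cube2 [CompactSpace X] [T2Space X]
    (hST : ∀ x, S (T x) = T (S x)) (hmin : minimalST S T) {u v a : X}
    (ha : (u, v, a, a) ∈ cube S T) : ∃ b, (u, v, b, b) ∈ cube S T ∧ (b, u) ∈ cube2 S := by
  set K : Set (X × X) := cube2 S ∩ {p | (u, v, p.1, p.1) ∈ cube S T}
  have hK : IsClosed K :=
    isClosed_closure.inter (isClosed_closure.preimage (by fun_prop))
  have hsnd : Prod.snd '' K = Set.univ := by
    refine eq_univ_of_isClosed_of_hpow_mem hmin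
      ((hK.isCompact.image continuous_snd).isClosed) (x := a)
      ⟨(a, a), ⟨subset_closure ⟨a, 0, by simp⟩, ha⟩, rfl⟩ ?_
    rintro n m _ ⟨⟨b, w⟩, ⟨hbw, hb⟩, rfl⟩
    exact ⟨_, ⟨mem_cube2_map_hpow hST n m hbw, mem_cube_map_hpow_thd_fth hST m hb⟩, rfl⟩
  obtain ⟨⟨b, _⟩, ⟨hbu, hb⟩, rfl⟩ : u ∈ Prod.snd '' K := hsnd ▸ Set.mem_univ u
  exact ⟨b, hb, hbu⟩

end cube

theorem stmt7 {X : Type*} [MetricSpace X] [CompactSpace X] (S T : X ≃ₜ X)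
    (hST : ∀ x, S (T x) = T (S x)) (hmin : minimalST S T)
    (h : cube2 S ∩ cube2 T = Set.diagonal X) :
    relS S T = Set.diagonal X := by
  ext ⟨u, v⟩
  constructor
  · rintro ⟨a, ha⟩
    obtain ⟨b, hb, hbu⟩ := exists_mem_cube_and_mem_cube2 hST hmin ha
    obtain rfl : u = b := h.subset ⟨swap_mem_cube2 hbu, mem_cube2_of_mem_cube_fst_thd hb⟩
    exact (h.subset ⟨swap_mem_cube2 (mem_cube2_of_mem_cube_fst_snd ha),
      mem_cube2_of_mem_cube_snd_fth hST hb⟩ : v = u).symm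
  · rintro (rfl : u = v)
    exact ⟨u, diag_mem_cube u⟩
end

section
/- Let (X,S,T) be a distal minimal system with commuting transformations S and T. If (a1,b1,a2,b2) ∈ Q_{S,T}(X) and (a2,b2,a3,b3) ∈ Q_{S,T}(X), then (a1,b1,a3,b3) ∈ Q_{S,T}(X). -/
variable {X : Type*} [TopologicalSpace X]

namespace Stmt10

variable {X : Type*} [TopologicalSpace X]

/-- combined power `S^a T^b` as a permutation. -/
def ps (S T : X ≃ₜ X) (a b : ℤ) : Equiv.Perm X := S.toEquiv ^ a * T.toEquiv ^ b

lemma commST {S T : X ≃ₜ X} (hST : ∀ x, S (T x) = T (S x)) :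
    Commute (S.toEquiv) (T.toEquiv) := by
  apply Equiv.ext; intro x; simp [Equiv.Perm.mul_apply, hST x]

lemma ps_mul {S T : X ≃ₜ X} (hST : ∀ x, S (T x) = T (S x)) (a b c d : ℤ) :
    ps S T a b * ps S T c d = ps S T (a + c) (b + d) := by
  have h : T.toEquiv ^ b * S.toEquiv ^ c = S.toEquiv ^ c * T.toEquiv ^ b :=
    (((commST hST).symm).zpow_zpow b c).eq
  unfold ps
  calc S.toEquiv ^ a * T.toEquiv ^ b * (S.toEquiv ^ c * T.toEquiv ^ d)
      = S.toEquiv ^ a * (T.toEquiv ^ b * S.toEquiv ^ c) * T.toEquiv ^ d := by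
        rw [mul_assoc, mul_assoc, mul_assoc]
    _ = S.toEquiv ^ a * (S.toEquiv ^ c * T.toEquiv ^ b) * T.toEquiv ^ d := by rw [h]
    _ = (S.toEquiv ^ a * S.toEquiv ^ c) * (T.toEquiv ^ b * T.toEquiv ^ d) := by
        rw [mul_assoc, mul_assoc, mul_assoc]
    _ = S.toEquiv ^ (a + c) * T.toEquiv ^ (b + d) := by rw [zpow_add, zpow_add]

lemma ps_apply_ps {S T : X ≃ₜ X} (hST : ∀ x, S (T x) = T (S x)) (a b c d : ℤ) (x : X) :
    ps S T a b (ps S T c d x) = ps S T (a + c) (b + d) x := by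
  rw [← ps_mul hST]; rfl

lemma hpow_S_eq (S T : X ≃ₜ X) (n : ℤ) (x : X) : hpow S n x = ps S T n 0 x := by
  simp [hpow, ps]

lemma hpow_T_eq (S T : X ≃ₜ X) (m : ℤ) (x : X) : hpow T m x = ps S T 0 m x := by
  simp [hpow, ps]

lemma ps_eq_hpow {S T : X ≃ₜ X} (hST : ∀ x, S (T x) = T (S x)) (a b : ℤ) (x : X) :
    hpow S a (hpow T b x) = ps S T a b x := by
  rw [hpow_T_eq S T, hpow_S_eq S T, ps_apply_ps hST]
  norm_num

lemma cont_npow (e : Equiv.Perm X) (he : Continuous ⇑e) (k : ℕ) : Continuous ⇑(e ^ k) := by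
  induction k with
  | zero => simpa using continuous_id
  | succ n ih => rw [pow_succ]; simpa [Equiv.Perm.coe_mul] using ih.comp he

lemma cont_zpow (S : X ≃ₜ X) (n : ℤ) : Continuous ⇑(S.toEquiv ^ n) := by
  rcases n with k | k
  · rw [Int.ofNat_eq_coe, zpow_natCast]
    exact cont_npow _ S.continuous k
  · rw [zpow_negSucc, ← inv_pow]
    exact cont_npow _ S.symm.continuous (k + 1)

lemma cont_ps (S T : X ≃ₜ X) (a b : ℤ) : Continuous ⇑(ps S T a b) := by
  have : ⇑(ps S T a b) = ⇑(S.toEquiv ^ a) ∘ ⇑(T.toEquiv ^ b) := rfl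
  rw [this]
  exact (cont_zpow S a).comp (cont_zpow T b)

lemma cont_hpow (S : X ≃ₜ X) (n : ℤ) : Continuous (hpow S n) := cont_zpow S n

def e1 (j : Fin 4) : ℤ := ((j : ℕ) % 2 : ℕ)
def e2 (j : Fin 4) : ℤ := ((j : ℕ) / 2 : ℕ)

def gam (S T : X ≃ₜ X) (a b n m : ℤ) : Fin 4 → X → X :=
  fun j => ⇑(ps S T (a + e1 j * n) (b + e2 j * m))

def Gam (S T : X ≃ₜ X) : Set (Fin 4 → X → X) := {p | ∃ a b n m, p = gam S T a b n m}

def E (S T : X ≃ₜ X) : Set (Fin 4 → X → X) := closure (Gam S T)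

def comp (p q : Fin 4 → X → X) : Fin 4 → X → X := fun j => p j ∘ q j

def act (p : Fin 4 → X → X) (z : X × X × X × X) : X × X × X × X :=
  (p 0 z.1, p 1 z.2.1, p 2 z.2.2.1, p 3 z.2.2.2)

def gen (S T : X ≃ₜ X) (x : X) (n m : ℤ) : X × X × X × X :=
  (x, hpow S n x, hpow T m x, hpow S n (hpow T m x))

lemma cube_eq (S T : X ≃ₜ X) : cube S T = closure {p | ∃ x n m, p = gen S T x n m} := rfl

lemma gen_mem_cube (S T : X ≃ₜ X) (x : X) (n m : ℤ) : gen S T x n m ∈ cube S T := by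
  rw [cube_eq]; exact subset_closure ⟨x, n, m, rfl⟩

lemma gen_zero (S T : X ≃ₜ X) (x : X) : gen S T x 0 0 = (x, x, x, x) := by
  simp [gen, hpow]

lemma gen_coords (S T : X ≃ₜ X) {hST : ∀ x, S (T x) = T (S x)} (x : X) (n m : ℤ) :
    gen S T x n m = (ps S T 0 0 x, ps S T n 0 x, ps S T 0 m x, ps S T n m x) := by
  simp only [gen, ← hpow_S_eq S T, ← hpow_T_eq S T, ps_eq_hpow hST]
  simp [hpow, ps]

lemma comp_gam {S T : X ≃ₜ X} (hST : ∀ x, S (T x) = T (S x)) (a b n m a' b' n' m' : ℤ) :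
    comp (gam S T a b n m) (gam S T a' b' n' m') = gam S T (a + a') (b + b') (n + n') (m + m') := by
  funext j x
  show ps S T _ _ (ps S T _ _ x) = _
  rw [ps_apply_ps hST]
  show ps S T _ _ x = ps S T _ _ x
  congr 2 <;> ring

lemma gam_id (S T : X ≃ₜ X) : gam S T 0 0 0 0 = fun _ => id := by
  funext j x
  show ps S T (0 + e1 j * 0) (0 + e2 j * 0) x = x
  simp [ps]

lemma ps_congr (S T : X ≃ₜ X) {a b a' b' : ℤ} (x : X) (h1 : a = a') (h2 : b = b') :
    ps S T a b x = ps S T a' b' x := by rw [h1, h2]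

lemma e1_0 : e1 (0:Fin 4) = 0 := rfl
lemma e1_1 : e1 (1:Fin 4) = 1 := rfl
lemma e1_2 : e1 (2:Fin 4) = 0 := rfl
lemma e1_3 : e1 (3:Fin 4) = 1 := rfl
lemma e2_0 : e2 (0:Fin 4) = 0 := rfl
lemma e2_1 : e2 (1:Fin 4) = 0 := rfl
lemma e2_2 : e2 (2:Fin 4) = 1 := rfl
lemma e2_3 : e2 (3:Fin 4) = 1 := rfl

lemma act_gam_gen {S T : X ≃ₜ X} (hST : ∀ x, S (T x) = T (S x)) (a b n m n' m' : ℤ) (x : X) :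
    act (gam S T a b n m) (gen S T x n' m') = gen S T (ps S T a b x) (n + n') (m + m') := by
  rw [gen_coords S T (hST := hST), gen_coords S T (hST := hST)]
  simp only [act, gam, e1_0, e1_1, e1_2, e1_3, e2_0, e2_1, e2_2, e2_3, ps_apply_ps hST,
    Prod.mk.injEq]
  refine ⟨?_, ?_, ?_, ?_⟩ <;> exact ps_congr S T x (by ring) (by ring)

lemma gam_mem (S T : X ≃ₜ X) (a b n m : ℤ) : gam S T a b n m ∈ Gam S T := by
  exact ⟨a, b, n, m, rfl⟩

lemma id_mem_E (S T : X ≃ₜ X) : (fun _ => id : Fin 4 → X → X) ∈ E S T :=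
  subset_closure (by rw [← gam_id S T]; exact gam_mem S T 0 0 0 0)

lemma cont_comp_right (q : Fin 4 → X → X) : Continuous fun p : Fin 4 → X → X => comp p q := by
  refine continuous_pi fun j => continuous_pi fun x => ?_
  exact (continuous_apply (q j x)).comp (continuous_apply j)

lemma cont_comp_left {h : Fin 4 → X → X} (hc : ∀ j, Continuous (h j)) :
    Continuous fun q : Fin 4 → X → X => comp h q := by
  refine continuous_pi fun j => continuous_pi fun x => ?_
  exact (hc j).comp ((continuous_apply x).comp (continuous_apply j))

lemma cont_act (z : X × X × X × X) : Continuous fun p : Fin 4 → X → X => act p z := by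
  unfold act
  exact ((continuous_apply z.1).comp (continuous_apply 0)).prodMk
    (((continuous_apply z.2.1).comp (continuous_apply 1)).prodMk
      (((continuous_apply z.2.2.1).comp (continuous_apply 2)).prodMk
        ((continuous_apply z.2.2.2).comp (continuous_apply 3))))

lemma cont_act_right {p : Fin 4 → X → X} (hp : ∀ j, Continuous (p j)) :
    Continuous (act p) := by
  unfold act
  exact ((hp 0).comp continuous_fst).prodMk
    (((hp 1).comp (continuous_fst.comp continuous_snd)).prodMk
      (((hp 2).comp ((continuous_fst.comp continuous_snd).comp continuous_snd)).prodMk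
        ((hp 3).comp ((continuous_snd.comp continuous_snd).comp continuous_snd))))

lemma comp_mem_E {S T : X ≃ₜ X} (hST : ∀ x, S (T x) = T (S x)) {p q : Fin 4 → X → X}
    (hp : p ∈ E S T) (hq : q ∈ E S T) : comp p q ∈ E S T := by
  have step1 : ∀ a b n m, comp (gam S T a b n m) q ∈ E S T := by
    intro a b n m
    have hcont : Continuous fun r : Fin 4 → X → X => comp (gam S T a b n m) r :=
      cont_comp_left (fun j => cont_ps S T _ _)
    have himg : (fun r => comp (gam S T a b n m) r) '' Gam S T ⊆ E S T := by
      rintro _ ⟨_, ⟨a', b', n', m', rfl⟩, rfl⟩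
      show comp (gam S T a b n m) (gam S T a' b' n' m') ∈ E S T
      rw [comp_gam hST]
      exact subset_closure (gam_mem S T _ _ _ _)
    have := (image_closure_subset_closure_image hcont) (Set.mem_image_of_mem _ hq)
    exact (closure_minimal himg isClosed_closure) this
  have hcont : Continuous fun r : Fin 4 → X → X => comp r q := cont_comp_right q
  have himg : (fun r => comp r q) '' Gam S T ⊆ E S T := by
    rintro _ ⟨_, ⟨a, b, n, m, rfl⟩, rfl⟩
    show comp (gam S T a b n m) q ∈ E S T
    exact step1 a b n m
  have := (image_closure_subset_closure_image hcont) (Set.mem_image_of_mem _ hp)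
  exact (closure_minimal himg isClosed_closure) this

lemma act_mem_cube {S T : X ≃ₜ X} (hST : ∀ x, S (T x) = T (S x)) {p : Fin 4 → X → X}
    (hp : p ∈ E S T) {z : X × X × X × X} (hz : z ∈ cube S T) : act p z ∈ cube S T := by
  have step1 : ∀ a b n m, act (gam S T a b n m) z ∈ cube S T := by
    intro a b n m
    have hcont : Continuous (act (gam S T a b n m)) :=
      cont_act_right (fun j => cont_ps S T _ _)
    have himg : act (gam S T a b n m) '' {w | ∃ x n' m', w = gen S T x n' m'} ⊆ cube S T := by
      rintro _ ⟨_, ⟨x, n', m', rfl⟩, rfl⟩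
      rw [act_gam_gen hST]
      exact gen_mem_cube S T _ _ _
    rw [cube_eq] at hz
    have := (image_closure_subset_closure_image hcont) (Set.mem_image_of_mem _ hz)
    exact (closure_minimal himg (by rw [cube_eq]; exact isClosed_closure)) this
  have hC : IsClosed {q : Fin 4 → X → X | act q z ∈ cube S T} :=
    IsClosed.preimage (cont_act z) (by rw [cube_eq]; exact isClosed_closure)
  have hGam : Gam S T ⊆ {q | act q z ∈ cube S T} := by
    rintro _ ⟨a, b, n, m, rfl⟩; exact step1 a b n m
  exact (closure_minimal hGam hC) hp

lemma act_comp (p q : Fin 4 → X → X) (z : X × X × X × X) :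
    act (comp p q) z = act p (act q z) := rfl

lemma act_id (z : X × X × X × X) : act (fun _ => id : Fin 4 → X → X) z = z := rfl

end Stmt10
namespace Stmt10

section Part2
variable {X : Type*} [MetricSpace X] [CompactSpace X]

lemma compactE (S T : X ≃ₜ X) : IsCompact (E S T) := isClosed_closure.isCompact

lemma cube_eq_image {S T : X ≃ₜ X} (hST : ∀ x, S (T x) = T (S x)) (hmin : minimalST S T)
    (x : X) : cube S T = (fun p => act p (x, x, x, x)) '' E S T := by
  apply Set.Subset.antisymm
  · rw [cube_eq]
    apply closure_minimal ?_ ((compactE S T).image (cont_act _)).isClosed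
    rintro _ ⟨y, n, m, rfl⟩
    have hclosed := ((compactE S T).image (cont_act ((x, x, x, x) : X × X × X × X))).isClosed
    have hsub : {w | ∃ a b : ℤ, w = act (gam S T a b n m) (x, x, x, x)} ⊆
        (fun p => act p (x, x, x, x)) '' E S T := by
      rintro _ ⟨a, b, rfl⟩
      exact ⟨gam S T a b n m, subset_closure (gam_mem S T a b n m), rfl⟩
    have hmem : gen S T y n m ∈
        closure {w | ∃ a b : ℤ, w = act (gam S T a b n m) (x, x, x, x)} := by
      rw [mem_closure_iff]
      intro o ho hmemo
      have hphi : Continuous fun w : X => gen S T w n m := by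
        exact continuous_id.prodMk ((cont_hpow S n).prodMk
          ((cont_hpow T m).prodMk ((cont_hpow S n).comp (cont_hpow T m))))
      have hopen : IsOpen ((fun w : X => gen S T w n m) ⁻¹' o) := ho.preimage hphi
      obtain ⟨w, hw1, hw2⟩ := (hmin x).exists_mem_open hopen ⟨y, hmemo⟩
      obtain ⟨a, b, rfl⟩ := hw1
      refine ⟨gen S T (hpow S a (hpow T b x)) n m, hw2, a, b, ?_⟩
      rw [ps_eq_hpow hST, ← gen_zero S T x, act_gam_gen hST]
      norm_num
    exact closure_minimal hsub hclosed hmem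
  · rintro _ ⟨p, hp, rfl⟩
    exact act_mem_cube hST hp (by rw [← gen_zero S T x]; exact gen_mem_cube S T x 0 0)

lemma idem_id {S T : X ≃ₜ X} (hST : ∀ x, S (T x) = T (S x)) (hd : distalST S T)
    {u : Fin 4 → X → X} (hu : u ∈ E S T) (huu : comp u u = u) :
    u = fun _ => id := by
  funext j x
  show u j x = x
  by_contra hne
  obtain ⟨ε, hε, hsep⟩ := hd x (u j x) (Ne.symm hne)
  have hC : IsClosed {q : Fin 4 → X → X | ε ≤ dist (q j x) (q j (u j x))} := by
    apply isClosed_le continuous_const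
    exact Continuous.dist ((continuous_apply x).comp (continuous_apply j))
      ((continuous_apply (u j x)).comp (continuous_apply j))
  have hGam : Gam S T ⊆ {q : Fin 4 → X → X | ε ≤ dist (q j x) (q j (u j x))} := by
    rintro _ ⟨a, b, n, m, rfl⟩
    show ε ≤ dist (ps S T _ _ x) (ps S T _ _ (u j x))
    rw [← ps_eq_hpow hST, ← ps_eq_hpow hST]
    exact hsep _ _
  have hmem := closure_minimal hGam hC hu
  have h2 : u j (u j x) = u j x := congrFun (congrFun huu j) x
  rw [Set.mem_setOf_eq, h2, dist_self] at hmem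
  linarith

lemma exists_left_inv {S T : X ≃ₜ X} (hST : ∀ x, S (T x) = T (S x)) (hd : distalST S T)
    {p : Fin 4 → X → X} (hp : p ∈ E S T) :
    ∃ q ∈ E S T, comp q p = fun _ => id := by
  letI : Mul (Fin 4 → X → X) := ⟨comp⟩
  letI : Semigroup (Fin 4 → X → X) := { mul_assoc := fun _ _ _ => rfl }
  have hcml : ∀ r : Fin 4 → X → X, Continuous (· * r) := fun r => cont_comp_right r
  have hmuldef : ∀ y z : Fin 4 → X → X, y * z = comp y z := fun _ _ => rfl
  have hsadd : ∀ y ∈ (fun q => comp q p) '' E S T, ∀ z ∈ (fun q => comp q p) '' E S T,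
      y * z ∈ (fun q => comp q p) '' E S T := by
    rintro _ ⟨q1, hq1, rfl⟩ _ ⟨q2, hq2, rfl⟩
    rw [hmuldef]
    exact ⟨comp (comp q1 p) q2,
      comp_mem_E hST (comp_mem_E hST hq1 hp) hq2, by funext j x; rfl⟩
  obtain ⟨u, huim, huu⟩ := exists_idempotent_in_compact_subsemigroup hcml
    ((fun q => comp q p) '' E S T)
    ⟨p, ⟨fun _ => id, id_mem_E S T, rfl⟩⟩
    ((compactE S T).image (cont_comp_right p)) hsadd
  obtain ⟨q, hq, hqp⟩ := huim
  have hqp' : comp q p = u := hqp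
  have huE : u ∈ E S T := by rw [← hqp']; exact comp_mem_E hST hq hp
  have huid : u = fun _ => id := idem_id hST hd huE huu
  exact ⟨q, hq, by rw [hqp', huid]⟩

lemma exists_inv {S T : X ≃ₜ X} (hST : ∀ x, S (T x) = T (S x)) (hd : distalST S T)
    {p : Fin 4 → X → X} (hp : p ∈ E S T) :
    ∃ q ∈ E S T, comp q p = (fun _ => id) ∧ comp p q = (fun _ => id) := by
  obtain ⟨q, hq, hqp⟩ := exists_left_inv hST hd hp
  obtain ⟨r, hr, hrq⟩ := exists_left_inv hST hd hq
  have hpr : p = r := by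
    have h1 : comp r (comp q p) = r := by rw [hqp]; rfl
    have h2 : comp (comp r q) p = p := by rw [hrq]; rfl
    have h3 : comp r (comp q p) = comp (comp r q) p := rfl
    rw [h3, h2] at h1
    exact h1
  exact ⟨q, hq, hqp, by rw [hpr, hrq]⟩

lemma exists_act_eq {S T : X ≃ₜ X} (hST : ∀ x, S (T x) = T (S x)) (hmin : minimalST S T)
    (hd : distalST S T) (x : X) {w v : X × X × X × X}
    (hw : w ∈ cube S T) (hv : v ∈ cube S T) : ∃ p ∈ E S T, act p w = v := by
  rw [cube_eq_image hST hmin x] at hw hv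
  obtain ⟨pw, hpw, hw⟩ := hw
  obtain ⟨pv, hpv, hv⟩ := hv
  obtain ⟨q, hq, hqp, -⟩ := exists_inv hST hd hpw
  refine ⟨comp pv q, comp_mem_E hST hpv hq, ?_⟩
  rw [← hw, ← act_comp]
  have hc : comp (comp pv q) pw = pv := by
    have h3 : comp (comp pv q) pw = comp pv (comp q pw) := rfl
    rw [h3, hqp]; rfl
  rw [hc]
  exact hv

lemma second_diag {S T : X ≃ₜ X} {a1 b1 a2 b2 : X} (h : (a1, b1, a2, b2) ∈ cube S T) :
    (a2, b2, a2, b2) ∈ cube S T := by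
  have hπ : Continuous (fun z : X × X × X × X => (z.2.2.1, z.2.2.2, z.2.2.1, z.2.2.2)) := by
    fun_prop
  have himg : (fun z : X × X × X × X => (z.2.2.1, z.2.2.2, z.2.2.1, z.2.2.2)) ''
      {p : X × X × X × X | ∃ x n m, p = gen S T x n m} ⊆ cube S T := by
    rintro _ ⟨_, ⟨x, n, m, rfl⟩, rfl⟩
    show (hpow T m x, hpow S n (hpow T m x), hpow T m x, hpow S n (hpow T m x)) ∈ cube S T
    have hg := gen_mem_cube S T (hpow T m x) n 0
    have h0 : hpow T (0 : ℤ) (hpow T m x) = hpow T m x := by simp [hpow]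
    rw [gen, h0] at hg
    exact hg
  rw [cube_eq] at h
  have hm := (image_closure_subset_closure_image hπ) (Set.mem_image_of_mem _ h)
  exact (closure_minimal himg (by rw [cube_eq]; exact isClosed_closure)) hm

def rmap (j : Fin 4) : Fin 4 := ⟨(j : ℕ) % 2, by omega⟩

def rho (p : Fin 4 → X → X) : Fin 4 → X → X := fun j => p (rmap j)

lemma rho_gam (S T : X ≃ₜ X) (a b n m : ℤ) : rho (gam S T a b n m) = gam S T a b n 0 := by
  funext j x
  show ps S T (a + e1 (rmap j) * n) (b + e2 (rmap j) * m) x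
      = ps S T (a + e1 j * n) (b + e2 j * 0) x
  have h1 : e1 (rmap j) = e1 j := by fin_cases j <;> rfl
  have h2 : e2 (rmap j) = 0 := by fin_cases j <;> rfl
  rw [h1, h2]
  exact ps_congr S T x (by ring) (by ring)

lemma rho_mem_E {S T : X ≃ₜ X} {p : Fin 4 → X → X} (hp : p ∈ E S T) : rho p ∈ E S T := by
  have hcont : Continuous (rho : (Fin 4 → X → X) → Fin 4 → X → X) :=
    continuous_pi fun j => continuous_apply (rmap j)
  have himg : rho '' Gam S T ⊆ E S T := by
    rintro _ ⟨_, ⟨a, b, n, m, rfl⟩, rfl⟩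
    rw [rho_gam]
    exact subset_closure (gam_mem S T a b n 0)
  exact closure_minimal himg isClosed_closure
    ((image_closure_subset_closure_image hcont) (Set.mem_image_of_mem _ hp))

end Part2

end Stmt10

open Stmt10

theorem stmt10 {X : Type*} [MetricSpace X] [CompactSpace X] (S T : X ≃ₜ X)
    (hST : ∀ x, S (T x) = T (S x)) (hmin : minimalST S T) (hd : distalST S T)
    (a1 b1 a2 b2 a3 b3 : X)
    (h1 : (a1, b1, a2, b2) ∈ cube S T) (h2 : (a2, b2, a3, b3) ∈ cube S T) :
    (a1, b1, a3, b3) ∈ cube S T := by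
  have h22 : (a2, b2, a2, b2) ∈ cube S T := second_diag h1
  obtain ⟨p, hpE, hact⟩ := exists_act_eq hST hmin hd a1 h22 h2
  obtain ⟨q, hqE, hqr, hrq⟩ := exists_inv hST hd (rho_mem_E hpE)
  obtain ⟨hp0, hp1, hp2, hp3⟩ : p 0 a2 = a2 ∧ p 1 b2 = b2 ∧ p 2 a2 = a3 ∧ p 3 b2 = b3 := by
    have h := hact
    rw [show act p (a2, b2, a2, b2) = (p 0 a2, p 1 b2, p 2 a2, p 3 b2) from rfl,
      Prod.ext_iff, Prod.ext_iff, Prod.ext_iff] at h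
    exact ⟨h.1, h.2.1, h.2.2.1, h.2.2.2⟩
  have keyrq : ∀ j : Fin 4, ∀ x : X, rho p j (q j x) = x :=
    fun j x => congrFun (congrFun hrq j) x
  have keyqr : ∀ j : Fin 4, ∀ x : X, q j (rho p j x) = x :=
    fun j x => congrFun (congrFun hqr j) x
  have hr0 : rho p 0 = p 0 := congrArg p (by decide : rmap (0 : Fin 4) = 0)
  have hr1 : rho p 1 = p 1 := congrArg p (by decide : rmap (1 : Fin 4) = 1)
  have hr2 : rho p 2 = p 0 := congrArg p (by decide : rmap (2 : Fin 4) = 0)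
  have hr3 : rho p 3 = p 1 := congrArg p (by decide : rmap (3 : Fin 4) = 1)
  have c0 : p 0 (q 0 a1) = a1 := by have := keyrq 0 a1; rwa [hr0] at this
  have c1 : p 1 (q 1 b1) = b1 := by have := keyrq 1 b1; rwa [hr1] at this
  have c2 : p 2 (q 2 a2) = a3 := by
    have h := keyqr 2 a2
    rw [hr2, hp0] at h
    rw [h, hp2]
  have c3 : p 3 (q 3 b2) = b3 := by
    have h := keyqr 3 b2
    rw [hr3, hp1] at h
    rw [h, hp3]
  have hmem : act (comp p q) (a1, b1, a2, b2) ∈ cube S T :=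
    act_mem_cube hST (comp_mem_E hST hpE hqE) h1
  rw [show act (comp p q) (a1, b1, a2, b2)
      = (p 0 (q 0 a1), p 1 (q 1 b1), p 2 (q 2 a2), p 3 (q 3 b2)) from rfl,
    c0, c1, c2, c3] at hmem
  exact hmem
end
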